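/- arXiv:1111.2902 — 2 statements merged into one kernel-verified Lean document; each statement's English description precedes it below -/
import Mathlib

section
/- Let (R,m) be a commutative Noetherian local ring and let X be a resolving subcategory of mod R with finite radius. Then sup over X ∈ X of the Loewy length of Γ_m(X) is finite. -/
open CategoryTheory IsLocalRing

universe u

section Prelim

variable (R : Type u) [CommRing R]

/-- The depth of a module over a local ring: the supremum of the lengths of
(weakly) regular sequences on `M` consisting of elements of the maximal ideal. -/
noncomputable def mdepth [IsLocalRing R] (M : Type u) [AddCommGroup M] [Module R M] : ℕ∞ :=
  sSup {n : ℕ∞ | ∃ rs : List R, (rs.length : ℕ∞) = n ∧ (∀ r ∈ rs, r ∈ maximalIdeal R) ∧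
    RingTheory.Sequence.IsWeaklyRegular M rs}

/-- A short exact sequence `0 → L → M → N → 0` of `R`-modules. -/
def SES (L M N : ModuleCat.{u} R) : Prop :=
  ∃ (f : L →ₗ[R] M) (g : M →ₗ[R] N),
    Function.Injective f ∧ Function.Surjective g ∧ LinearMap.ker g = LinearMap.range f

/-- `N` is a direct summand of `M`. -/
def IsSummand (N M : ModuleCat.{u} R) : Prop :=
  ∃ (i : N →ₗ[R] M) (p : M →ₗ[R] N), p.comp i = LinearMap.id

/-- `N` is a (minimal) first syzygy of `M`: the kernel of a minimal free cover of `M`. -/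
def IsSyzygy (M N : ModuleCat.{u} R) : Prop :=
  ∃ (n : ℕ) (f : (Fin n → R) →ₗ[R] M), Function.Surjective f ∧
    LinearMap.ker f ≤ ((⊥ : Ideal R).jacobson) • (⊤ : Submodule R (Fin n → R)) ∧
    Nonempty (N ≃ₗ[R] LinearMap.ker f)

/-- `N` is an `n`-th (minimal) syzygy of `M`. -/
def IsNSyzygy : ℕ → ModuleCat.{u} R → ModuleCat.{u} R → Prop
  | 0, M, N => Nonempty (N ≃ₗ[R] M)
  | n + 1, M, N => ∃ K : ModuleCat.{u} R, IsSyzygy R M K ∧ IsNSyzygy n K N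

/-- The additive closure of a class of modules: closure under finite direct sums
and direct summands. -/
inductive AddClosure (T : Set (ModuleCat.{u} R)) : ModuleCat.{u} R → Prop
  | of {M : ModuleCat.{u} R} : M ∈ T → AddClosure T M
  | prod {M N : ModuleCat.{u} R} : AddClosure T M → AddClosure T N →
      AddClosure T (ModuleCat.of R (M × N))
  | summand {M N : ModuleCat.{u} R} : AddClosure T M → IsSummand R N M → AddClosure T N

/-- `[X]`: the additive closure of `{R} ∪ {Ω^i X : i ≥ 0, X ∈ X}`. -/
def bracket (X : Set (ModuleCat.{u} R)) : Set (ModuleCat.{u} R) :=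
  {M | AddClosure R (insert (ModuleCat.of R R)
    {N | ∃ M₀ ∈ X, ∃ i : ℕ, IsNSyzygy R i M₀ N}) M}

/-- `X ∘ Y`: modules `M` fitting in an exact sequence `0 → X → M → Y → 0`. -/
def circOp (X Y : Set (ModuleCat.{u} R)) : Set (ModuleCat.{u} R) :=
  {M | ∃ X₀ ∈ X, ∃ Y₀ ∈ Y, SES R X₀ M Y₀}

/-- `X • Y = [[X] ∘ [Y]]`. -/
def bull (X Y : Set (ModuleCat.{u} R)) : Set (ModuleCat.{u} R) :=
  bracket R (circOp R (bracket R X) (bracket R Y))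

/-- The ball `[C]_r` of radius `r` centered at `C`. -/
def ball (C : ModuleCat.{u} R) : ℕ → Set (ModuleCat.{u} R)
  | 0 => ∅
  | 1 => bracket R {C}
  | r + 2 => bracket R (circOp R (ball C (r + 1)) (bracket R {C}))

/-- A resolving subcategory of `mod R`. -/
def IsResolving (X : Set (ModuleCat.{u} R)) : Prop :=
  (∀ M ∈ X, Module.Finite R M) ∧
  (ModuleCat.of R R ∈ X) ∧
  (∀ M ∈ X, ∀ N : ModuleCat.{u} R, IsSummand R N M → N ∈ X) ∧
  (∀ L M N : ModuleCat.{u} R, SES R L M N → L ∈ X → N ∈ X → M ∈ X) ∧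
  (∀ L M N : ModuleCat.{u} R, SES R L M N → M ∈ X → N ∈ X → L ∈ X)

end Prelim

section Prelim2

variable (R : Type u) [CommRing R]

/-- The Ext module `Ext^n_R(M, N)`. -/
noncomputable def extM (M N : ModuleCat.{u} R) (n : ℕ) : ModuleCat.{u} R :=
  ((Ext R (ModuleCat.{u} R) n).obj (Opposite.op M)).obj N

/-- A finitely generated module `M` is totally reflexive if `M → M**` is bijective and
`Ext^i(M, R) = 0 = Ext^i(M*, R)` for all `i > 0`. -/
def TotallyReflexive (M : Type u) [AddCommGroup M] [Module R M] : Prop :=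
  Module.Finite R M ∧
  Function.Bijective (Module.Dual.eval R M) ∧
  (∀ i : ℕ, 0 < i →
    Subsingleton (extM R (ModuleCat.of R M) (ModuleCat.of R R) i)) ∧
  (∀ i : ℕ, 0 < i →
    Subsingleton (extM R (ModuleCat.of R (Module.Dual R M)) (ModuleCat.of R R) i))

/-- `C` is a first cosyzygy `Ω⁻¹M` of `M`: the `R`-dual of a minimal first syzygy of `M*`. -/
def IsCosyzygy (M : Type u) [AddCommGroup M] [Module R M] (C : ModuleCat.{u} R) : Prop :=
  ∃ K : ModuleCat.{u} R, IsSyzygy R (ModuleCat.of R (Module.Dual R M)) K ∧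
    Nonempty (C ≃ₗ[R] Module.Dual R K)

/-- `T` is the Auslander transpose of `M`: the cokernel of the dual of the first map
in a minimal free presentation of `M`. -/
def IsTranspose (M T : ModuleCat.{u} R) : Prop :=
  ∃ (n₀ n₁ : ℕ) (d : (Fin n₁ → R) →ₗ[R] (Fin n₀ → R)) (p : (Fin n₀ → R) →ₗ[R] M),
    Function.Surjective p ∧ LinearMap.ker p = LinearMap.range d ∧
    LinearMap.ker p ≤ ((⊥ : Ideal R).jacobson) • (⊤ : Submodule R (Fin n₀ → R)) ∧
    LinearMap.ker d ≤ ((⊥ : Ideal R).jacobson) • (⊤ : Submodule R (Fin n₁ → R)) ∧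
    Nonempty (T ≃ₗ[R] (Module.Dual R (Fin n₁ → R) ⧸ LinearMap.range d.dualMap))

/-- The `I`-torsion submodule `Γ_I(M)`. -/
def torsSub (I : Ideal R) (M : Type u) [AddCommGroup M] [Module R M] : Submodule R M :=
  ⨆ n : ℕ, Submodule.torsionBySet R M ((I ^ n : Ideal R) : Set R)

/-- A Noetherian local ring is Gorenstein iff it has finite self-injective dimension,
iff `Ext^i(k, R) = 0` for all sufficiently large `i`. -/
def IsGorensteinLocal [IsLocalRing R] : Prop :=
  ∃ n : ℕ, ∀ i : ℕ, n < i →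
    Subsingleton (extM R (ModuleCat.of R (ResidueField R)) (ModuleCat.of R R) i)

/-- A maximal Cohen-Macaulay module: finitely generated with depth equal to `dim R`. -/
def IsMCM [IsLocalRing R] (M : ModuleCat.{u} R) : Prop :=
  Module.Finite R M ∧ ((mdepth R M : ℕ∞) : WithBot ℕ∞) = ringKrullDim R

/-- `X` is a thick subcategory of `G`: closed under direct summands and two-out-of-three
for short exact sequences with all terms in `G`. -/
def IsThickIn (G X : Set (ModuleCat.{u} R)) : Prop :=
  X ⊆ G ∧ (∀ M ∈ X, ∀ N : ModuleCat.{u} R, IsSummand R N M → N ∈ X) ∧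
  (∀ L M N : ModuleCat.{u} R, L ∈ G → M ∈ G → N ∈ G → SES R L M N →
    ((L ∈ X ∧ M ∈ X) → N ∈ X) ∧ ((L ∈ X ∧ N ∈ X) → M ∈ X) ∧ ((M ∈ X ∧ N ∈ X) → L ∈ X))

/-- The resolving closure `res M`: the smallest resolving subcategory containing `M`. -/
def resClosure (M : ModuleCat.{u} R) : Set (ModuleCat.{u} R) :=
  ⋂₀ {X | IsResolving R X ∧ M ∈ X}

/-- The ball `|G|_r` (no syzygies, no free modules added). -/
def pball (G : ModuleCat.{u} R) : ℕ → Set (ModuleCat.{u} R)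
  | 0 => ∅
  | 1 => {M | AddClosure R {G} M}
  | r + 2 => {M | AddClosure R
      (circOp R (pball G (r + 1)) {N | AddClosure R {G} N}) M}

/-- An indecomposable module. -/
def Indecomp (M : ModuleCat.{u} R) : Prop :=
  ¬ Subsingleton M ∧ ∀ A B : Submodule R M, IsCompl A B → A = ⊥ ∨ B = ⊥

/-- `N` is the kernel of some surjection from a finite free module onto `M`
(a not-necessarily-minimal syzygy). -/
def IsGSyzygy (M N : ModuleCat.{u} R) : Prop :=
  ∃ (n : ℕ) (f : (Fin n → R) →ₗ[R] M), Function.Surjective f ∧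
    Nonempty (N ≃ₗ[R] LinearMap.ker f)

/-- `N` is an `n`-fold (not-necessarily-minimal) syzygy of `M`. -/
def IsGNSyzygy : ℕ → ModuleCat.{u} R → ModuleCat.{u} R → Prop
  | 0, M, N => Nonempty (N ≃ₗ[R] M)
  | n + 1, M, N => ∃ K : ModuleCat.{u} R, IsGSyzygy R M K ∧ IsGNSyzygy n K N

/-- Projective dimension at most `n`. -/
def PdLE (n : ℕ) (M : ModuleCat.{u} R) : Prop :=
  ∃ N : ModuleCat.{u} R, IsGNSyzygy R n M N ∧ Module.Projective R N

/-- Projective dimension, as an element of `ℕ∞`. -/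
noncomputable def pdim (M : ModuleCat.{u} R) : ℕ∞ :=
  sInf {n : ℕ∞ | ∃ m : ℕ, (m : ℕ∞) = n ∧ PdLE R m M}

end Prelim2

section AuxTB

variable {R : Type u} [CommRing R]

/-- `I^k` kills the `I`-torsion submodule. -/
def TBaux (I : Ideal R) (k : ℕ) (M : Type u) [AddCommGroup M] [Module R M] : Prop :=
  ∀ r ∈ I ^ k, ∀ x ∈ torsSub R I M, r • x = (0 : M)

variable {I : Ideal R}

theorem torsionBySet_pow_mono {M : Type u} [AddCommGroup M] [Module R M] {a b : ℕ} (h : a ≤ b) :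
    Submodule.torsionBySet R M ((I ^ a : Ideal R) : Set R) ≤
      Submodule.torsionBySet R M ((I ^ b : Ideal R) : Set R) :=
  Submodule.torsionBySet_le_torsionBySet_of_subset (Ideal.pow_le_pow_right h)

theorem mem_torsSub_iff {M : Type u} [AddCommGroup M] [Module R M] {x : M} :
    x ∈ torsSub R I M ↔ ∃ n : ℕ, ∀ r ∈ I ^ n, r • x = (0 : M) := by
  unfold torsSub
  rw [Submodule.mem_iSup_of_directed _
    (fun a b => ⟨max a b, torsionBySet_pow_mono (le_max_left a b),
      torsionBySet_pow_mono (le_max_right a b)⟩)]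
  constructor
  · rintro ⟨n, hn⟩
    exact ⟨n, fun r hr => (Submodule.mem_torsionBySet_iff _ _).mp hn ⟨r, hr⟩⟩
  · rintro ⟨n, hn⟩
    exact ⟨n, (Submodule.mem_torsionBySet_iff _ _).mpr fun a => hn a a.2⟩

theorem map_mem_torsSub {M N : Type u} [AddCommGroup M] [Module R M]
    [AddCommGroup N] [Module R N] (f : M →ₗ[R] N) {x : M} (hx : x ∈ torsSub R I M) :
    f x ∈ torsSub R I N := by
  rw [mem_torsSub_iff] at hx ⊢
  obtain ⟨n, hn⟩ := hx
  exact ⟨n, fun r hr => by rw [← f.map_smul, hn r hr, f.map_zero]⟩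

theorem TBaux.mono {M : Type u} [AddCommGroup M] [Module R M] {k k' : ℕ}
    (h : TBaux I k M) (hk : k ≤ k') : TBaux I k' M :=
  fun r hr x hx => h r (Ideal.pow_le_pow_right hk hr) x hx

theorem TBaux.of_injective {M N : Type u} [AddCommGroup M] [Module R M]
    [AddCommGroup N] [Module R N] {k : ℕ} (h : TBaux I k N) (f : M →ₗ[R] N)
    (hf : Function.Injective f) : TBaux I k M := by
  intro r hr x hx
  apply hf
  rw [f.map_smul, f.map_zero]
  exact h r hr _ (map_mem_torsSub f hx)

theorem TBaux.prod {M N : Type u} [AddCommGroup M] [Module R M]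
    [AddCommGroup N] [Module R N] {k : ℕ} (hM : TBaux I k M) (hN : TBaux I k N) :
    TBaux I k (M × N) := by
  intro r hr x hx
  have h1 := map_mem_torsSub (LinearMap.fst R M N) hx
  have h2 := map_mem_torsSub (LinearMap.snd R M N) hx
  exact Prod.ext (hM r hr _ h1) (hN r hr _ h2)

theorem TBaux.pi {k : ℕ} (hR : TBaux I k R) (n : ℕ) : TBaux I k (Fin n → R) := by
  intro r hr x hx
  funext j
  exact hR r hr (x j) (map_mem_torsSub (LinearMap.proj j) hx)

theorem TBaux.ses {L M N : Type u} [AddCommGroup L] [Module R L]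
    [AddCommGroup M] [Module R M] [AddCommGroup N] [Module R N] {a b : ℕ}
    (hL : TBaux I a L) (hN : TBaux I b N) (f : L →ₗ[R] M) (g : M →ₗ[R] N)
    (hf : Function.Injective f) (hker : LinearMap.ker g = LinearMap.range f) :
    TBaux I (a + b) M := by
  intro r hr x hx
  rw [pow_add] at hr
  refine Submodule.mul_induction_on hr (fun p hp q hq => ?_)
    (fun r₁ r₂ h1 h2 => by rw [add_smul, h1, h2, add_zero])
  -- q • x ∈ ker g
  have hqx : q • x ∈ LinearMap.range f := by
    rw [← hker, LinearMap.mem_ker, g.map_smul]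
    exact hN q hq _ (map_mem_torsSub g hx)
  obtain ⟨y, hy⟩ := hqx
  have hytors : y ∈ torsSub R I L := by
    have : f y ∈ torsSub R I M := hy ▸ Submodule.smul_mem _ q hx
    rw [mem_torsSub_iff] at this ⊢
    obtain ⟨n, hn⟩ := this
    exact ⟨n, fun s hs => hf (by rw [f.map_smul, f.map_zero]; exact hn s hs)⟩
  rw [mul_smul, ← hy, ← f.map_smul, hL p hp y hytors, f.map_zero]

theorem TBaux.exists_of_finite [IsNoetherianRing R] (M : Type u) [AddCommGroup M]
    [Module R M] [Module.Finite R M] : ∃ k, TBaux I k M := by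
  have : IsNoetherian R M := inferInstance
  have hfg : (torsSub R I M).FG := IsNoetherian.noetherian _
  obtain ⟨F, hF⟩ := hfg
  have hFsub : (F : Set M) ⊆ torsSub R I M := hF ▸ Submodule.subset_span
  -- choose exponents for each generator
  have hch : ∀ x ∈ F, ∃ n : ℕ, ∀ r ∈ I ^ n, r • x = (0 : M) := fun x hx =>
    mem_torsSub_iff.mp (hFsub hx)
  choose! nf hnf using hch
  refine ⟨F.sup nf, fun r hr x hx => ?_⟩
  -- torsSub = span F ≤ torsionBySet (I ^ F.sup nf)
  have hle : torsSub R I M ≤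
      Submodule.torsionBySet R M ((I ^ F.sup nf : Ideal R) : Set R) := by
    rw [← hF, Submodule.span_le]
    intro y hy
    have hy' : y ∈ Submodule.torsionBySet R M ((I ^ nf y : Ideal R) : Set R) :=
      (Submodule.mem_torsionBySet_iff _ _).mpr fun a => hnf y hy a a.2
    exact torsionBySet_pow_mono (Finset.le_sup hy) hy'
  exact (Submodule.mem_torsionBySet_iff _ _).mp (hle hx) ⟨r, hr⟩

end AuxTB

section AuxCat

variable {R : Type u} [CommRing R] {I : Ideal R}

theorem TBaux.of_equiv {M N : Type u} [AddCommGroup M] [Module R M]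
    [AddCommGroup N] [Module R N] {k : ℕ} (h : TBaux I k N) (e : M ≃ₗ[R] N) :
    TBaux I k M :=
  h.of_injective e.toLinearMap e.injective

theorem TBaux.of_syzygy {kR : ℕ} (hR : TBaux I kR R) {M K : ModuleCat.{u} R}
    (h : IsSyzygy R M K) : TBaux I kR ↥K := by
  obtain ⟨n, f, -, -, ⟨e⟩⟩ := h
  exact ((hR.pi n).of_injective (LinearMap.ker f).subtype Subtype.val_injective).of_equiv e

theorem TBaux.of_nsyzygy {kR : ℕ} (hR : TBaux I kR R) :
    ∀ (i k : ℕ) (M N : ModuleCat.{u} R), IsNSyzygy R i M N → TBaux I k ↥M →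
      TBaux I (max k kR) ↥N := by
  intro i
  induction i with
  | zero =>
    rintro k M N ⟨e⟩ hM
    exact (hM.of_equiv e).mono (le_max_left _ _)
  | succ j ih =>
    rintro k M N ⟨K, hK, hN⟩ hM
    have h := ih kR K N hN (hR.of_syzygy hK)
    rw [max_self] at h
    exact h.mono (le_max_right _ _)

theorem TBaux.of_addClosure {k : ℕ} {T : Set (ModuleCat.{u} R)}
    (hT : ∀ M ∈ T, TBaux I k ↥M) {M : ModuleCat.{u} R} (hM : AddClosure R T M) :
    TBaux I k ↥M := by
  induction hM with
  | of h => exact hT _ h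
  | prod hA hB ihA ihB => exact ihA.prod ihB
  | summand hA hsum ih =>
    obtain ⟨i, p, hpi⟩ := hsum
    exact ih.of_injective i
      (Function.LeftInverse.injective fun x => LinearMap.congr_fun hpi x)

theorem TBaux.of_bracket {k kR : ℕ} (hR : TBaux I kR R) {T : Set (ModuleCat.{u} R)}
    (hT : ∀ M ∈ T, TBaux I k ↥M) {M : ModuleCat.{u} R} (hM : M ∈ bracket R T) :
    TBaux I (max k kR) ↥M := by
  refine TBaux.of_addClosure ?_ hM
  rintro N (rfl | ⟨M₀, hM₀, i, hsyz⟩)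
  · exact hR.mono (le_max_right _ _)
  · exact hR.of_nsyzygy i k M₀ N hsyz (hT _ hM₀)

theorem TBaux.of_circOp {k₁ k₂ : ℕ} {T₁ T₂ : Set (ModuleCat.{u} R)}
    (h₁ : ∀ M ∈ T₁, TBaux I k₁ ↥M) (h₂ : ∀ M ∈ T₂, TBaux I k₂ ↥M)
    {M : ModuleCat.{u} R} (hM : M ∈ circOp R T₁ T₂) : TBaux I (k₁ + k₂) ↥M := by
  obtain ⟨A, hA, B, hB, f, g, hf, -, hker⟩ := hM
  exact (h₁ A hA).ses (h₂ B hB) f g hf hker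

theorem TBaux.of_ball {kC kR : ℕ} (hR : TBaux I kR R) {C : ModuleCat.{u} R}
    (hC : TBaux I kC ↥C) :
    ∀ (r : ℕ) (M : ModuleCat.{u} R), M ∈ ball R C r → TBaux I ((r + 1) * (kC + kR)) ↥M := by
  intro r
  induction r with
  | zero => intro M hM; exact absurd hM (Set.notMem_empty M)
  | succ r ih =>
    match r, ih with
    | 0, _ =>
      intro M hM
      have hT : ∀ N ∈ ({C} : Set (ModuleCat.{u} R)), TBaux I kC ↥N := by
        rintro N rfl; exact hC
      exact (TBaux.of_bracket hR hT hM).mono (by omega)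
    | s + 1, ih =>
      intro M hM
      have hT : ∀ N ∈ ({C} : Set (ModuleCat.{u} R)), TBaux I kC ↥N := by
        rintro N rfl; exact hC
      have hball : ∀ N ∈ ball R C (s + 1), TBaux I ((s + 2) * (kC + kR)) ↥N := ih
      have hbrC : ∀ N ∈ bracket R ({C} : Set (ModuleCat.{u} R)),
          TBaux I (max kC kR) ↥N := fun N hN => TBaux.of_bracket hR hT hN
      have hcirc : ∀ N ∈ circOp R (ball R C (s + 1)) (bracket R {C}),
          TBaux I ((s + 2) * (kC + kR) + max kC kR) ↥N := fun N hN =>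
        TBaux.of_circOp hball hbrC hN
      have := TBaux.of_bracket hR hcirc hM
      refine this.mono ?_
      have h1 : max kC kR ≤ kC + kR := by omega
      have h2 : max ((s + 2) * (kC + kR) + max kC kR) kR ≤ (s + 3) * (kC + kR) := by
        have : (s + 3) * (kC + kR) = (s + 2) * (kC + kR) + (kC + kR) := by ring
        omega
      exact h2

end AuxCat

/-- If a resolving subcategory `X` of `mod R` has finite radius, then
the Loewy lengths of the `m`-torsion submodules `Γ_m(X)`, `X ∈ X`, are bounded. -/
theorem loewyLength_torsion_bounded_of_finite_radius
    (R : Type u) [CommRing R] [IsNoetherianRing R] [IsLocalRing R]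
    (X : Set (ModuleCat.{u} R)) (hX : IsResolving R X)
    (hrad : ∃ (C : ModuleCat.{u} R) (n : ℕ), Module.Finite R C ∧ X ⊆ ball R C (n + 1)) :
    ∃ B : ℕ, ∀ M ∈ X,
      (maximalIdeal R) ^ B • torsSub R (maximalIdeal R) ↥M = (⊥ : Submodule R ↥M) := by
  obtain ⟨C, n, hCfin, hball⟩ := hrad
  haveI := hCfin
  obtain ⟨kR, hkR⟩ := TBaux.exists_of_finite (I := maximalIdeal R) R
  obtain ⟨kC, hkC⟩ := TBaux.exists_of_finite (I := maximalIdeal R) ↥C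
  refine ⟨(n + 2) * (kC + kR), fun M hM => ?_⟩
  have h := TBaux.of_ball hkR hkC (n + 1) M (hball hM)
  rw [eq_bot_iff, Submodule.smul_le]
  intro r hr x hx
  rw [Submodule.mem_bot]
  exact h r hr x hx
end

section
/- Let (R,m,k) be a commutative Noetherian local ring and M a finitely generated R-module with pd_R M = 1, locally free on the punctured spectrum. Let σ be a nonzero socle element of Ext^1_R(M,R), represented by an extension 0 → R → N → M → 0. Then there is a short exact sequence 0 → k → Ext^1_R(M,R) → Ext^1_R(N,R) → 0; in particular length(Ext^1_R(N,R)) = length(Ext^1_R(M,R)) − 1. -/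
open CategoryTheory IsLocalRing

universe u

/-!
Pushing the presentation `0 → F₁ →d F₀ → M → 0` out along `φ` gives the free resolution
`0 → F₁ → R ⊕ F₀ → N → 0` with differential `(-φ, d)`, whose dual has image `im d^* + Rφ`.
Hence `Ext¹(N, R) = Ext¹(M, R) / Rσ`, and `Rσ ≅ k` because `σ ≠ 0` is killed by `m`.
By the comparison theorem, any other free resolution of `N` computes an isomorphic `Ext¹`.
-/

section Resolutions

open LinearMap Module
open Function (Exact Injective Surjective)

variable {R A B C : Type*} [CommRing R] [AddCommGroup A] [Module R A]
  [AddCommGroup B] [Module R B] [AddCommGroup C] [Module R C]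

theorem LinearMap.exists_comp_eq_of_range_le {f : A →ₗ[R] C} {g : B →ₗ[R] C}
    (hg : Injective g) (h : range f ≤ range g) : ∃ f' : A →ₗ[R] B, g ∘ₗ f' = f :=
  ⟨(LinearEquiv.ofInjective g hg).symm ∘ₗ f.codRestrict _ fun a ↦ h ⟨a, rfl⟩, by
    ext a
    simp [LinearEquiv.ofInjective_symm_apply]⟩

variable {N P₀ P₁ Q₀ Q₁ : Type*} [AddCommGroup N] [Module R N]
  [AddCommGroup P₀] [Module R P₀] [AddCommGroup P₁] [Module R P₁]
  [AddCommGroup Q₀] [Module R Q₀] [AddCommGroup Q₁] [Module R Q₁]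
  {e : P₁ →ₗ[R] P₀} {q : P₀ →ₗ[R] N} {e' : Q₁ →ₗ[R] Q₀} {q' : Q₀ →ₗ[R] N}

theorem exists_chainMap [Module.Projective R P₀] (hexact : Exact e q)
    (he' : Injective e') (hq' : Surjective q') (hexact' : Exact e' q') :
    ∃ (u₀ : P₀ →ₗ[R] Q₀) (u₁ : P₁ →ₗ[R] Q₁), q' ∘ₗ u₀ = q ∧ e' ∘ₗ u₁ = u₀ ∘ₗ e := by
  obtain ⟨u₀, hu₀⟩ := Module.projective_lifting_property q' q hq'
  obtain ⟨u₁, hu₁⟩ := exists_comp_eq_of_range_le (f := u₀ ∘ₗ e) he' <| by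
    rintro _ ⟨x, rfl⟩
    rw [← hexact'.linearMap_ker_eq, mem_ker, ← LinearMap.comp_apply, ← LinearMap.comp_assoc, hu₀]
    exact hexact.apply_apply_eq_zero x
  exact ⟨u₀, u₁, hu₀, hu₁⟩

theorem exists_eq_id_add_comp_of_chainMap [Module.Projective R P₀] (he : Injective e)
    (hexact : Exact e q) {w₀ : P₀ →ₗ[R] P₀} {w₁ : P₁ →ₗ[R] P₁} (hw₀ : q ∘ₗ w₀ = q)
    (hw : e ∘ₗ w₁ = w₀ ∘ₗ e) : ∃ s : P₀ →ₗ[R] P₁, w₁ = LinearMap.id + s ∘ₗ e := by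
  obtain ⟨s, hs⟩ := exists_comp_eq_of_range_le (f := w₀ - LinearMap.id) he <| by
    rintro _ ⟨x, rfl⟩
    rw [← hexact.linearMap_ker_eq, mem_ker]
    simp [← LinearMap.comp_apply q w₀, hw₀]
  refine ⟨s, ext fun x ↦ he ?_⟩
  have hsx := congr($hs (e x))
  have hwx := congr($hw x)
  simp only [LinearMap.comp_apply, LinearMap.sub_apply] at hsx hwx
  simp [hsx, hwx]

theorem range_dualMap_le_comap_of_chainMap {u₀ : P₀ →ₗ[R] Q₀} {u₁ : P₁ →ₗ[R] Q₁}
    (hu : e' ∘ₗ u₁ = u₀ ∘ₗ e) :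
    range e'.dualMap ≤ (range e.dualMap).comap u₁.dualMap := by
  rintro _ ⟨α, rfl⟩
  exact ⟨u₀.dualMap α, by ext x; exact congr(α ($hu x)).symm⟩

theorem mk_dualMap_eq_self_of_eq_id_add_comp {w₁ : P₁ →ₗ[R] P₁} (s : P₀ →ₗ[R] P₁)
    (hw : w₁ = LinearMap.id + s ∘ₗ e) (β : Dual R P₁) :
    (Submodule.Quotient.mk (w₁.dualMap β) : Dual R P₁ ⧸ range e.dualMap) =
      Submodule.Quotient.mk β := by
  rw [Submodule.Quotient.eq]
  exact ⟨β ∘ₗ s, by subst hw; ext; simp⟩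

theorem nonempty_cokernel_dualMap_equiv [Module.Projective R P₀] [Module.Projective R Q₀]
    (he : Injective e) (hq : Surjective q) (hexact : Exact e q)
    (he' : Injective e') (hq' : Surjective q') (hexact' : Exact e' q') :
    Nonempty ((Dual R P₁ ⧸ range e.dualMap) ≃ₗ[R] (Dual R Q₁ ⧸ range e'.dualMap)) := by
  obtain ⟨u₀, u₁, hu₀, hu⟩ := exists_chainMap hexact he' hq' hexact'
  obtain ⟨v₀, v₁, hv₀, hv⟩ := exists_chainMap hexact' he hq hexact
  obtain ⟨s, hs⟩ := exists_eq_id_add_comp_of_chainMap (w₀ := v₀ ∘ₗ u₀) (w₁ := v₁ ∘ₗ u₁) he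
    hexact (by rw [← LinearMap.comp_assoc, hv₀, hu₀])
    (by rw [← LinearMap.comp_assoc, hv, LinearMap.comp_assoc, hu, LinearMap.comp_assoc])
  obtain ⟨t, ht⟩ := exists_eq_id_add_comp_of_chainMap (w₀ := u₀ ∘ₗ v₀) (w₁ := u₁ ∘ₗ v₁) he'
    hexact' (by rw [← LinearMap.comp_assoc, hu₀, hv₀])
    (by rw [← LinearMap.comp_assoc, hu, LinearMap.comp_assoc, hv, LinearMap.comp_assoc])
  have hu' := range_dualMap_le_comap_of_chainMap hu
  have hv' := range_dualMap_le_comap_of_chainMap hv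
  refine ⟨.ofLinearMap (Submodule.mapQ _ _ v₁.dualMap hv') (Submodule.mapQ _ _ u₁.dualMap hu')
    ?_ ?_⟩ <;> ext β
  · exact mk_dualMap_eq_self_of_eq_id_add_comp t ht β
  · exact mk_dualMap_eq_self_of_eq_id_add_comp s hs β

end Resolutions

section Pushout

open LinearMap
open Function (Exact Injective Surjective)

variable {R F₀ F₁ L M N : Type*} [CommRing R] [AddCommGroup F₀] [Module R F₀]
  [AddCommGroup F₁] [Module R F₁] [AddCommGroup L] [Module R L] [AddCommGroup M] [Module R M]
  [AddCommGroup N] [Module R N]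
  {d : F₁ →ₗ[R] F₀} {p : F₀ →ₗ[R] M} {φ : F₁ →ₗ[R] L} {ι : L →ₗ[R] N} {π : N →ₗ[R] M}
  {ρ : F₀ →ₗ[R] N}

theorem surjective_coprod_of_comp_eq (hp : Surjective p) (hιπ : Exact ι π)
    (hρp : π ∘ₗ ρ = p) : Surjective (ι.coprod ρ) := by
  intro n
  obtain ⟨x, hx⟩ := hp (π n)
  obtain ⟨l, hl⟩ := (hιπ (n - ρ x)).mp <| by
    rw [map_sub, ← LinearMap.comp_apply, hρp, hx, sub_self]
  exact ⟨(l, x), by simp [hl]⟩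

theorem exact_neg_prod_coprod_of_comp_eq (hdp : Exact d p) (hι : Injective ι)
    (hιπ : Exact ι π) (hρp : π ∘ₗ ρ = p) (hρd : ρ ∘ₗ d = ι ∘ₗ φ) :
    Exact ((-φ).prod d) (ι.coprod ρ) := by
  rintro ⟨l, x⟩
  constructor
  · intro h
    rw [coprod_apply] at h
    have hx : p x = 0 := by
      rw [← hρp, LinearMap.comp_apply, ← neg_eq_iff_add_eq_zero.mpr h, map_neg,
        hιπ.apply_apply_eq_zero, neg_zero]
    obtain ⟨y, rfl⟩ := (hdp x).mp hx
    refine ⟨y, Prod.ext (hι ?_) rfl⟩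
    have hφ : ι (φ y) = ρ (d y) := congr($hρd y).symm
    simpa [hφ, neg_eq_iff_add_eq_zero, add_comm] using h
  · rintro ⟨y, hy⟩
    rw [← hy]
    simp [← LinearMap.comp_apply ρ d, hρd]

end Pushout

theorem LinearMap.range_dualMap_prod {R A B : Type*} [CommRing R] [AddCommGroup A] [Module R A]
    [AddCommGroup B] [Module R B] (f : Module.Dual R A) (g : A →ₗ[R] B) :
    range (f.prod g).dualMap = (R ∙ f) ⊔ range g.dualMap := by
  apply le_antisymm
  · rintro _ ⟨α, rfl⟩
    refine Submodule.mem_sup.mpr ⟨α (1, 0) • f,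
      Submodule.smul_mem _ _ (Submodule.mem_span_singleton_self f),
      g.dualMap (α ∘ₗ LinearMap.inr R R B), ⟨_, rfl⟩, ?_⟩
    ext a
    rw [LinearMap.add_apply, LinearMap.smul_apply, smul_eq_mul, mul_comm, ← smul_eq_mul,
      ← map_smul]
    simp [← map_add]
  · refine sup_le ((Submodule.span_singleton_le_iff_mem _ _).mpr ⟨LinearMap.fst R R B, ?_⟩) ?_
    · ext a; simp
    · rintro _ ⟨β, rfl⟩
      exact ⟨β ∘ₗ LinearMap.snd R R B, by ext a; simp⟩

theorem IsLocalRing.exists_injective_residueField_range_eq_span {R X : Type*} [CommRing R]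
    [IsLocalRing R] [AddCommGroup X] [Module R X] {x : X} (hx : x ≠ 0)
    (hm : ∀ a ∈ maximalIdeal R, a • x = 0) :
    ∃ F : ResidueField R →ₗ[R] X, Function.Injective F ∧ LinearMap.range F = R ∙ x := by
  have hker : LinearMap.ker (LinearMap.toSpanSingleton R X x) = maximalIdeal R := by
    refine le_antisymm (fun r hr ↦ ?_) (fun r hr ↦ hm r hr)
    by_contra hrm
    exact hx (((IsLocalRing.notMem_maximalIdeal.mp hrm).smul_eq_zero).mp hr)
  refine ⟨(maximalIdeal R).liftQ _ hker.ge, ?_, ?_⟩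
  · exact LinearMap.ker_eq_bot.mp (Submodule.ker_liftQ_eq_bot _ _ _ hker.le)
  · exact (Submodule.range_liftQ _ _ _).trans (LinearMap.range_toSpanSingleton x)

theorem Submodule.ker_factor {R M : Type*} [CommRing R] [AddCommGroup M] [Module R M]
    {p p' : Submodule R M} (h : p ≤ p') : LinearMap.ker (Submodule.factor h) = p'.map p.mkQ := by
  rw [Submodule.factor, Submodule.mapQ, Submodule.ker_liftQ, LinearMap.comp_id, Submodule.ker_mkQ]

theorem socle_extension_ext_exact_sequence_general
    (R : Type u) [CommRing R] [IsLocalRing R]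
    (M : Type u) [AddCommGroup M] [Module R M]
    (n₀ n₁ : ℕ) (d : (Fin n₁ → R) →ₗ[R] (Fin n₀ → R)) (p : (Fin n₀ → R) →ₗ[R] M)
    (hd : Function.Injective d) (hp : Function.Surjective p)
    (hdp : LinearMap.ker p = LinearMap.range d)
    (φ : Module.Dual R (Fin n₁ → R))
    (hσ_ne : (Submodule.Quotient.mk φ :
      Module.Dual R (Fin n₁ → R) ⧸ LinearMap.range d.dualMap) ≠ 0)
    (hσ_socle : ∀ a ∈ maximalIdeal R, a • (Submodule.Quotient.mk φ :
      Module.Dual R (Fin n₁ → R) ⧸ LinearMap.range d.dualMap) = 0)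
    (N : Type u) [AddCommGroup N] [Module R N]
    (ι : R →ₗ[R] N) (π : N →ₗ[R] M)
    (hι : Function.Injective ι)
    (hιπ : LinearMap.ker π = LinearMap.range ι)
    (ρ : (Fin n₀ → R) →ₗ[R] N)
    (hρp : π.comp ρ = p) (hρd : ρ.comp d = ι.comp φ) :
    ∀ (m₀ m₁ : ℕ) (e : (Fin m₁ → R) →ₗ[R] (Fin m₀ → R)) (q : (Fin m₀ → R) →ₗ[R] N),
      Function.Injective e → Function.Surjective q →
      LinearMap.ker q = LinearMap.range e →
      ∃ (F : ResidueField R →ₗ[R]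
          (Module.Dual R (Fin n₁ → R) ⧸ LinearMap.range d.dualMap))
        (G : (Module.Dual R (Fin n₁ → R) ⧸ LinearMap.range d.dualMap) →ₗ[R]
          (Module.Dual R (Fin m₁ → R) ⧸ LinearMap.range e.dualMap)),
        Function.Injective F ∧ Function.Surjective G ∧
        LinearMap.ker G = LinearMap.range F := by
  intro m₀ m₁ e q he hq hqe
  obtain ⟨F, hF, hF_range⟩ :=
    IsLocalRing.exists_injective_residueField_range_eq_span hσ_ne hσ_socle
  have hιπ' := LinearMap.exact_iff.mpr hιπ
  obtain ⟨E⟩ := nonempty_cokernel_dualMap_equiv (fun _ _ h ↦ hd (congrArg Prod.snd h))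
    (surjective_coprod_of_comp_eq hp hιπ' hρp)
    (exact_neg_prod_coprod_of_comp_eq (LinearMap.exact_iff.mpr hdp) hι hιπ' hρp hρd)
    he hq (LinearMap.exact_iff.mpr hqe)
  have hrange : LinearMap.range ((-φ).prod d).dualMap = (R ∙ φ) ⊔ LinearMap.range d.dualMap := by
    rw [LinearMap.range_dualMap_prod, ← Set.neg_singleton, Submodule.span_neg]
  have hle : LinearMap.range d.dualMap ≤ LinearMap.range ((-φ).prod d).dualMap :=
    hrange ▸ le_sup_right
  refine ⟨F, E.toLinearMap ∘ₗ Submodule.factor hle, hF,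
    E.surjective.comp (Submodule.factor_surjective hle), ?_⟩
  rw [LinearEquiv.ker_comp, Submodule.ker_factor, hrange, Submodule.map_sup,
    Submodule.mkQ_map_self, sup_bot_eq, Submodule.map_span, Set.image_singleton,
    Submodule.mkQ_apply, hF_range]

/-- Let `(R,m,k)` be Noetherian local, `M` finitely generated with
`pd_R M = 1` (witnessed by a free resolution `0 → F₁ →d F₀ →p M → 0`, `M` not
projective), locally free on the punctured spectrum. Let `σ = [φ]` be a nonzero socle
element of `Ext¹_R(M,R) = coker(d*)`, represented by an extension `0 → R →ι N →π M → 0`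
(via the pushout map `ρ`). Then there is a short exact sequence
`0 → k → Ext¹_R(M,R) → Ext¹_R(N,R) → 0`, where `Ext¹_R(N,R)` is computed from any free
resolution `0 → G₁ →e G₀ →q N → 0`. -/
theorem socle_extension_ext_exact_sequence
    (R : Type u) [CommRing R] [IsNoetherianRing R] [IsLocalRing R]
    (M : Type u) [AddCommGroup M] [Module R M] [Module.Finite R M]
    (n₀ n₁ : ℕ) (d : (Fin n₁ → R) →ₗ[R] (Fin n₀ → R)) (p : (Fin n₀ → R) →ₗ[R] M)
    (hd : Function.Injective d) (hp : Function.Surjective p)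
    (hdp : LinearMap.ker p = LinearMap.range d)
    (hnotproj : ¬ Module.Projective R M)
    (hloc : ∀ (P : Ideal R) [P.IsPrime], P ≠ maximalIdeal R →
      Module.Free (Localization.AtPrime P) (LocalizedModule P.primeCompl M))
    (φ : Module.Dual R (Fin n₁ → R))
    (hσ_ne : (Submodule.Quotient.mk φ :
      Module.Dual R (Fin n₁ → R) ⧸ LinearMap.range d.dualMap) ≠ 0)
    (hσ_socle : ∀ a ∈ maximalIdeal R, a • (Submodule.Quotient.mk φ :
      Module.Dual R (Fin n₁ → R) ⧸ LinearMap.range d.dualMap) = 0)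
    (N : Type u) [AddCommGroup N] [Module R N]
    (ι : R →ₗ[R] N) (π : N →ₗ[R] M)
    (hι : Function.Injective ι) (hπ : Function.Surjective π)
    (hιπ : LinearMap.ker π = LinearMap.range ι)
    (ρ : (Fin n₀ → R) →ₗ[R] N)
    (hρp : π.comp ρ = p) (hρd : ρ.comp d = ι.comp φ) :
    ∀ (m₀ m₁ : ℕ) (e : (Fin m₁ → R) →ₗ[R] (Fin m₀ → R)) (q : (Fin m₀ → R) →ₗ[R] N),
      Function.Injective e → Function.Surjective q →
      LinearMap.ker q = LinearMap.range e →
      ∃ (F : ResidueField R →ₗ[R]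
          (Module.Dual R (Fin n₁ → R) ⧸ LinearMap.range d.dualMap))
        (G : (Module.Dual R (Fin n₁ → R) ⧸ LinearMap.range d.dualMap) →ₗ[R]
          (Module.Dual R (Fin m₁ → R) ⧸ LinearMap.range e.dualMap)),
        Function.Injective F ∧ Function.Surjective G ∧
        LinearMap.ker G = LinearMap.range F :=
  socle_extension_ext_exact_sequence_general R M n₀ n₁ d p hd hp hdp φ hσ_ne hσ_socle N ι π hι hιπ ρ
    hρp hρd
end
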